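/- There exists a linear isomorphism φ from M₃(ℝ) onto the space S₄⁰(ℝ) of symmetric trace-free real 4×4 matrices such that: (i) for every J ∈ M₃(ℝ) and every unit quaternion q (viewed as the vector of its four real coordinates in ℝ⁴), ½ J·Φ(q) = ⟨q, φ(J) q⟩; (ii) for every unit quaternion q, φ(Φ(q)) = q qᵀ − ¼ I₄; and (iii) J ∈ M₃(ℝ) is a diagonal matrix if and only if φ(J) is a diagonal matrix. -/

import Mathlib

open Matrix Quaternion

/-- The space of `3 × 3` real matrices. -/
abbrev Mat3 := Matrix (Fin 3) (Fin 3) ℝ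

/-- The inner product `A·B = ½ Tr(ABᵀ)` on `M₃(ℝ)`. -/
noncomputable def mdot (A B : Mat3) : ℝ := (1 / 2) * (A * Bᵀ).trace

/-- Identification of `ℝ³` with purely imaginary quaternions via the basis `(i, j, k)`. -/
def toQuat (u : Fin 3 → ℝ) : ℍ[ℝ] := ⟨0, u 0, u 1, u 2⟩

/-- The vector of imaginary parts of a quaternion. -/
def imPart (x : ℍ[ℝ]) : Fin 3 → ℝ := ![x.imI, x.imJ, x.imK]

/-- The matrix, in the basis `(i, j, k)` of purely imaginary quaternions, of the linear map
`u ↦ q u q*`. -/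
noncomputable def Phi (q : ℍ[ℝ]) : Mat3 :=
  Matrix.of fun i j => imPart (q * toQuat (fun k => if k = j then 1 else 0) * star q) i

/-- A quaternion seen as the vector of its four real coordinates in `ℝ⁴`. -/
def qv (q : ℍ[ℝ]) : Fin 4 → ℝ := ![q.re, q.imI, q.imJ, q.imK]

/-- `S₄⁰(ℝ)`: the space of symmetric trace-free real `4 × 4` matrices (`Q`-tensors). -/
def S40 : Submodule ℝ (Matrix (Fin 4) (Fin 4) ℝ) where
  carrier := {Q | Qᵀ = Q ∧ Q.trace = 0}
  add_mem' := by
    rintro a b ⟨ha1, ha2⟩ ⟨hb1, hb2⟩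
    exact ⟨by rw [Matrix.transpose_add, ha1, hb1], by rw [Matrix.trace_add, ha2, hb2, add_zero]⟩
  zero_mem' := ⟨by simp, by simp⟩
  smul_mem' := by
    rintro c a ⟨ha1, ha2⟩
    exact ⟨by rw [Matrix.transpose_smul, ha1], by rw [Matrix.trace_smul, ha2, smul_zero]⟩

/-!
`φ(J)` is the Gram matrix of the quadratic form `q ↦ ¼ Σᵢⱼ Jᵢⱼ Φ(q)ᵢⱼ` on `ℝ⁴`, so (i) holds for
every `q`, unit or not. It is trace-free because each entry of `Φ(q)` is a harmonic quadratic form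
in `q`, and its off-diagonal entries are the sums and differences of the pairs `Jᵢⱼ, Jⱼᵢ`, which
gives (iii). Through (i), property (ii) amounts to `Tr(Φ(q) Φ(p)ᵀ) = 4⟨p, q⟩² − |p|²|q|²`, i.e. to
`Tr Φ(r) = 4 (Re r)² − |r|²` for `r = q p*`.
-/

noncomputable def toQtensor (J : Mat3) : Matrix (Fin 4) (Fin 4) ℝ :=
  (1 / 4 : ℝ) • !![J 0 0 + J 1 1 + J 2 2, J 2 1 - J 1 2, J 0 2 - J 2 0, J 1 0 - J 0 1;
                   J 2 1 - J 1 2, J 0 0 - J 1 1 - J 2 2, J 0 1 + J 1 0, J 0 2 + J 2 0;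
                   J 0 2 - J 2 0, J 0 1 + J 1 0, J 1 1 - J 0 0 - J 2 2, J 1 2 + J 2 1;
                   J 1 0 - J 0 1, J 0 2 + J 2 0, J 1 2 + J 2 1, J 2 2 - J 0 0 - J 1 1]

noncomputable def ofQtensor (M : Matrix (Fin 4) (Fin 4) ℝ) : Mat3 :=
  (2 : ℝ) • !![M 0 0 + M 1 1, M 1 2 - M 0 3, M 1 3 + M 0 2;
               M 1 2 + M 0 3, M 0 0 + M 2 2, M 2 3 - M 0 1;
               M 1 3 - M 0 2, M 2 3 + M 0 1, M 0 0 + M 3 3]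

lemma toQtensor_mem_S40 (J : Mat3) : toQtensor J ∈ S40 := by
  constructor
  · ext i j; fin_cases i <;> fin_cases j <;> simp [toQtensor]
  · simp [toQtensor, Matrix.trace, Fin.sum_univ_four]; ring

lemma ofQtensor_toQtensor (J : Mat3) : ofQtensor (toQtensor J) = J := by
  ext i j; fin_cases i <;> fin_cases j <;> simp [toQtensor, ofQtensor] <;> ring

lemma toQtensor_ofQtensor {M : Matrix (Fin 4) (Fin 4) ℝ} (hM : M ∈ S40) :
    toQtensor (ofQtensor M) = M := by
  obtain ⟨hsymm, htrace⟩ := hM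
  have hs (i j : Fin 4) : M j i = M i j := congrFun (congrFun hsymm i) j
  simp only [Matrix.trace, Matrix.diag, Fin.sum_univ_four] at htrace
  ext i j
  fin_cases i <;> fin_cases j <;> simp [toQtensor, ofQtensor] <;>
    linarith [hs 0 1, hs 0 2, hs 0 3, hs 1 2, hs 1 3, hs 2 3]

noncomputable def qtensorEquiv : Mat3 ≃ₗ[ℝ] S40 where
  toFun J := ⟨toQtensor J, toQtensor_mem_S40 J⟩
  invFun M := ofQtensor M
  map_add' A B := Subtype.ext <| by
    ext i j; fin_cases i <;> fin_cases j <;> simp [toQtensor] <;> ring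
  map_smul' c A := Subtype.ext <| by
    ext i j; fin_cases i <;> fin_cases j <;> simp [toQtensor] <;> ring
  left_inv := ofQtensor_toQtensor
  right_inv M := Subtype.ext (toQtensor_ofQtensor M.2)

lemma coe_qtensorEquiv_apply (J : Mat3) :
    (qtensorEquiv J : Matrix (Fin 4) (Fin 4) ℝ) = toQtensor J :=
  rfl

lemma Phi_eq (q : ℍ[ℝ]) : Phi q =
    !![q.re ^ 2 + q.imI ^ 2 - q.imJ ^ 2 - q.imK ^ 2, 2 * (q.imI * q.imJ - q.re * q.imK),
        2 * (q.imI * q.imK + q.re * q.imJ);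
       2 * (q.imI * q.imJ + q.re * q.imK), q.re ^ 2 - q.imI ^ 2 + q.imJ ^ 2 - q.imK ^ 2,
        2 * (q.imJ * q.imK - q.re * q.imI);
       2 * (q.imI * q.imK - q.re * q.imJ), 2 * (q.imJ * q.imK + q.re * q.imI),
        q.re ^ 2 - q.imI ^ 2 - q.imJ ^ 2 + q.imK ^ 2] := by
  ext i j
  fin_cases i <;> fin_cases j <;>
    simp [Phi, imPart, Quaternion.re_mul, Quaternion.imI_mul, Quaternion.imJ_mul,
      Quaternion.imK_mul] <;> simp [toQuat] <;> ring

lemma mdot_eq_sum (A B : Mat3) : mdot A B = (1 / 2) * ∑ i, ∑ j, A i j * B i j := by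
  simp only [mdot, Matrix.trace, Matrix.diag, Matrix.mul_apply, Matrix.transpose_apply,
    Finset.mul_sum]

lemma qv_dotProduct_toQtensor_mulVec (J : Mat3) (q : ℍ[ℝ]) :
    qv q ⬝ᵥ (toQtensor J *ᵥ qv q) = (1 / 2) * mdot J (Phi q) := by
  rw [mdot_eq_sum, Phi_eq]
  simp only [dotProduct, qv, mulVec, toQtensor, one_div, Matrix.smul_apply, of_apply, cons_val',
    cons_val_fin_one, smul_eq_mul, Fin.sum_univ_four, cons_val_zero, cons_val_one, cons_val,
    Fin.sum_univ_three]
  ring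

lemma toQtensor_Phi (q : ℍ[ℝ]) :
    toQtensor (Phi q) = vecMulVec (qv q) (qv q) - (normSq q / 4) • 1 := by
  rw [Phi_eq, Quaternion.normSq_def']
  ext i j
  fin_cases i <;> fin_cases j <;> simp [toQtensor, vecMulVec, qv] <;> ring

lemma isDiag_fin_three_iff {α : Type*} [Zero α] (A : Matrix (Fin 3) (Fin 3) α) :
    A.IsDiag ↔ A 0 1 = 0 ∧ A 0 2 = 0 ∧ A 1 0 = 0 ∧ A 1 2 = 0 ∧ A 2 0 = 0 ∧ A 2 1 = 0 := by
  rw [Matrix.IsDiag, Pairwise]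
  simp [Fin.forall_fin_succ, and_assoc]

lemma isDiag_fin_four_iff_of_transpose_eq {α : Type*} [Zero α] {M : Matrix (Fin 4) (Fin 4) α}
    (hM : Mᵀ = M) :
    M.IsDiag ↔ M 0 1 = 0 ∧ M 0 2 = 0 ∧ M 0 3 = 0 ∧ M 1 2 = 0 ∧ M 1 3 = 0 ∧ M 2 3 = 0 := by
  have hs (i j : Fin 4) : M j i = M i j := congrFun (congrFun hM i) j
  rw [Matrix.IsDiag, Pairwise]
  simp [Fin.forall_fin_succ, hs 0 1, hs 0 2, hs 0 3, hs 1 2, hs 1 3, hs 2 3]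
  tauto

lemma isDiag_toQtensor_iff (J : Mat3) : (toQtensor J).IsDiag ↔ J.IsDiag := by
  rw [isDiag_fin_four_iff_of_transpose_eq (toQtensor_mem_S40 J).1, isDiag_fin_three_iff]
  simp only [toQtensor, smul_of, of_apply, cons_val_zero, cons_val_one, cons_val, Pi.smul_apply,
    smul_eq_mul, mul_eq_zero, one_div, inv_eq_zero, OfNat.ofNat_ne_zero, false_or]
  constructor
  · rintro ⟨h₁, h₂, h₃, h₄, h₅, h₆⟩
    refine ⟨?_, ?_, ?_, ?_, ?_, ?_⟩ <;> linarith
  · rintro ⟨h₀₁, h₀₂, h₁₀, h₁₂, h₂₀, h₂₁⟩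
    simp [h₀₁, h₀₂, h₁₀, h₁₂, h₂₀, h₂₁]

theorem exists_linear_iso_to_Qtensors :
    ∃ φ : Mat3 ≃ₗ[ℝ] S40,
      (∀ (J : Mat3) (q : ℍ[ℝ]), ‖q‖ = 1 →
        (1 / 2) * mdot J (Phi q) = qv q ⬝ᵥ ((φ J : Matrix (Fin 4) (Fin 4) ℝ) *ᵥ qv q)) ∧
      (∀ q : ℍ[ℝ], ‖q‖ = 1 →
        (φ (Phi q) : Matrix (Fin 4) (Fin 4) ℝ) = vecMulVec (qv q) (qv q) - (4 : ℝ)⁻¹ • 1) ∧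
      (∀ J : Mat3, J.IsDiag ↔ (φ J : Matrix (Fin 4) (Fin 4) ℝ).IsDiag) := by
  refine ⟨qtensorEquiv, fun J q _ => ?_, fun q hq => ?_, fun J => ?_⟩
  · rw [coe_qtensorEquiv_apply, qv_dotProduct_toQtensor_mulVec]
  · rw [coe_qtensorEquiv_apply, toQtensor_Phi, Quaternion.normSq_eq_norm_mul_self, hq]
    norm_num
  · rw [coe_qtensorEquiv_apply, isDiag_toQtensor_iff]
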